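/- Let k ≥ 2 and let h, h′ be integers with 1 ≤ h, h′ < k, gcd(h,k) = 1, and h·h′ ≡ 1 (mod k). Then (k²/6)·Σ_{d=1}^{k-1} B₃(d/k)·cot(π d h/k) = −(2·k³/(2π)³)·Σ_{ℓ ∈ ℤ, ℓ ≠ 0} B̃₁(ℓ·h′/k)/ℓ³, where B₃(x) = x³ − (3/2)x² + (1/2)x is the third Bernoulli polynomial and the series on the right converges absolutely. -/

import Mathlib

/-- The periodic Bernoulli function `B̃₁`: `B̃₁(x) = {x} - 1/2` for `x ∉ ℤ`,
and `B̃₁(x) = 0` for `x ∈ ℤ`. -/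
noncomputable def periodicB1 (x : ℝ) : ℝ :=
  if Int.fract x = 0 then 0 else Int.fract x - 1 / 2

/-! The Fourier series `Σ_{n ≥ 1} sin(2πnx)/n³ = (2π)³/12 · B₃(x)` on `[0, 1]` turns the left-hand
side into `Σ_n n⁻³ Σ_d sin(2πnd/k) cot(πdh/k)`. Writing `r = nh' mod k` and `θ_d = πdh/k`, the inner
sum is `Σ_d sin(2rθ_d) cot θ_d`; expanding `cot θ · sin 2rθ` as a telescoping sum of cosines and
summing `cos(2jθ_d)` over `d` as a sum of `k`-th roots of unity gives `k - 2r = -2k B̃₁(nh'/k)`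
for `r ≠ 0`, and `0 = B̃₁(nh'/k)` for `r = 0`. Since `l ↦ B̃₁(lh'/k)/l³` is even, the series over
`ℤ` is twice the series over `n ≥ 1`. -/

open Real Finset

lemma periodicB1_neg (x : ℝ) : periodicB1 (-x) = -periodicB1 x := by
  unfold periodicB1
  by_cases hx : Int.fract x = 0
  · simp [hx, Int.fract_neg_eq_zero]
  · rw [if_neg hx, if_neg (mt Int.fract_neg_eq_zero.mp hx), Int.fract_neg hx]
    ring

lemma abs_periodicB1_le (x : ℝ) : |periodicB1 x| ≤ 1 / 2 := by
  unfold periodicB1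
  split_ifs
  · norm_num
  · rw [abs_le]
    constructor <;> linarith [Int.fract_nonneg x, Int.fract_lt_one x]

lemma periodicB1_natCast_div {k : ℕ} (hk : k ≠ 0) (m : ℕ) :
    periodicB1 (m / k) = if m % k = 0 then 0 else ((m % k : ℕ) : ℝ) / k - 1 / 2 := by
  simp only [periodicB1, Int.fract_div_natCast_eq_div_natCast_mod, div_eq_zero_iff,
    Nat.cast_eq_zero, hk, or_false]

lemma summable_abs_periodicB1_div_int_pow (x : ℤ → ℝ) {p : ℕ} (hp : 1 < p) :
    Summable fun l : ℤ => |periodicB1 (x l) / (l : ℝ) ^ p| := by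
  refine .of_nonneg_of_le (fun _ => abs_nonneg _) (fun l => ?_)
    (Real.summable_one_div_int_pow.mpr hp).abs
  rw [abs_div, abs_div, abs_one]
  exact div_le_div_of_nonneg_right ((abs_periodicB1_le _).trans (by norm_num)) (abs_nonneg _)

lemma cot_mul_sin_two_mul_nat {θ : ℝ} (hθ : sin θ ≠ 0) (m : ℕ) :
    cot θ * sin (2 * m * θ) = cos (2 * m * θ) - 1 + 2 * ∑ j ∈ range m, cos (2 * j * θ) := by
  induction m with
  | zero => simp
  | succ m ih =>
    rw [sum_range_succ]
    have h1 : 2 * ((m + 1 : ℕ) : ℝ) * θ = 2 * m * θ + 2 * θ := by push_cast; ring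
    rw [h1, sin_add, cos_add, sin_two_mul, cos_two_mul, cot_eq_cos_div_sin] at *
    field_simp at ih ⊢
    linear_combination ih + 2 * cos θ * sin (2 * m * θ) * sin_sq_add_cos_sq θ

lemma sum_range_cos_two_pi_mul_div {k : ℕ} (hk : k ≠ 0) (m : ℤ) :
    ∑ a ∈ range k, cos (2 * π * m * a / k) = if (k : ℤ) ∣ m then k else 0 := by
  have hζ := Complex.isPrimitiveRoot_exp k hk
  set z := Complex.exp (2 * π * Complex.I / k) ^ m
  have hre (a : ℕ) : cos (2 * π * m * a / k) = (z ^ a).re := by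
    rw [← zpow_natCast, ← zpow_mul, ← Complex.exp_int_mul, ← Complex.exp_ofReal_mul_I_re]
    push_cast
    ring_nf
  simp_rw [hre, ← Complex.re_sum]
  split_ifs with hdvd
  · simp [z, (hζ.zpow_eq_one_iff_dvd m).mpr hdvd]
  · have hz : z ^ k = 1 := by
      rw [← zpow_natCast, ← zpow_mul]
      exact (hζ.zpow_eq_one_iff_dvd _).mpr (dvd_mul_left _ _)
    rw [geom_sum_eq (mt (hζ.zpow_eq_one_iff_dvd m).mp hdvd), hz]
    simp

lemma sum_Icc_cos_two_mul_mul_pi_mul_div {k h j : ℕ} (hcop : h.Coprime k) (hj : j < k) :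
    ∑ d ∈ Icc 1 (k - 1), cos (2 * j * (π * d * h / k)) = (if j = 0 then (k : ℝ) else 0) - 1 := by
  have hrange : range k = insert 0 (Icc 1 (k - 1)) := by
    ext a
    simp only [mem_range, mem_insert, mem_Icc]
    omega
  have hdvd : (k : ℤ) ∣ ((j * h : ℕ) : ℤ) ↔ j = 0 := by
    rw [Int.natCast_dvd_natCast, hcop.symm.dvd_mul_right]
    exact ⟨fun h => Nat.eq_zero_of_dvd_of_lt h hj, fun h => h ▸ dvd_zero k⟩
  have hsum := sum_range_cos_two_pi_mul_div (by omega : k ≠ 0) (j * h : ℕ)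
  simp only [hrange, sum_insert (show 0 ∉ Icc 1 (k - 1) by simp), hdvd] at hsum
  have hterm (d : ℕ) : cos (2 * j * (π * d * h / k)) = cos (2 * π * (j * h) * d / k) := by
    ring_nf
  push_cast at hsum
  simp only [hterm, mul_zero, zero_div, cos_zero] at hsum ⊢
  linarith

lemma sin_pi_mul_mul_div_ne_zero {k h d : ℕ} (hcop : h.Coprime k) (hd : d ∈ Icc 1 (k - 1)) :
    sin (π * d * h / k) ≠ 0 := by
  intro hzero
  obtain ⟨hd1, hdk⟩ := mem_Icc.mp hd
  obtain ⟨n, hn⟩ := Real.sin_eq_zero_iff.mp hzero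
  rw [eq_div_iff (by exact_mod_cast (by omega : k ≠ 0))] at hn
  have hnk : ((n * k : ℤ) : ℝ) = ((d * h : ℕ) : ℝ) := by
    push_cast
    apply mul_left_cancel₀ pi_ne_zero
    linear_combination hn
  have hkd : k ∣ d := hcop.symm.dvd_of_dvd_mul_right
    (Int.natCast_dvd_natCast.mp ⟨n, by rw [← Int.cast_inj.mp hnk]; ring⟩)
  have := Nat.le_of_dvd (by omega) hkd
  omega

lemma sum_sin_two_mul_mul_cot {k h r : ℕ} (hcop : h.Coprime k) (hr : r < k) :
    ∑ d ∈ Icc 1 (k - 1), sin (2 * r * (π * d * h / k)) * cot (π * d * h / k)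
      = if r = 0 then 0 else (k : ℝ) - 2 * r := by
  rw [sum_congr rfl fun d hd =>
      (mul_comm _ _).trans (cot_mul_sin_two_mul_nat (sin_pi_mul_mul_div_ne_zero hcop hd) r),
    sum_add_distrib, sum_sub_distrib, ← mul_sum, sum_comm, sum_const, Nat.card_Icc,
    sum_Icc_cos_two_mul_mul_pi_mul_div hcop hr,
    sum_congr rfl fun j hj => sum_Icc_cos_two_mul_mul_pi_mul_div hcop ((mem_range.mp hj).trans hr),
    sum_sub_distrib, sum_ite_eq']
  rcases Nat.eq_zero_or_pos r with rfl | hr0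
  · simp [Nat.cast_sub (by omega : 1 ≤ k)]
  · simp [hr0.ne', hr0, Nat.cast_sub (by omega : 1 ≤ k)]
    ring

lemma sum_sin_mul_cot_eq_periodicB1 {k h h' : ℕ} (hk : k ≠ 0) (hinv : h * h' ≡ 1 [MOD k])
    (n : ℕ) :
    ∑ d ∈ Icc 1 (k - 1), sin (2 * π * n * (d / k)) * cot (π * d * h / k)
      = -2 * k * periodicB1 (n * h' / k) := by
  set r := n * h' % k
  have hrn : r * h ≡ n [MOD k] :=
    calc r * h ≡ n * h' * h [MOD k] := (Nat.mod_modEq _ _).mul_right h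
      _ = n * (h * h') := by ring
      _ ≡ n * 1 [MOD k] := hinv.mul_left n
      _ = n := mul_one n
  obtain ⟨t, ht⟩ := Nat.modEq_iff_dvd.mp hrn
  have hsin (d : ℕ) : sin (2 * π * n * (d / k)) = sin (2 * r * (π * d * h / k)) := by
    have hk' : (k : ℝ) ≠ 0 := by exact_mod_cast hk
    have ht' : (n : ℝ) = r * h + k * t := by
      rw [sub_eq_iff_eq_add'] at ht
      exact_mod_cast ht
    rw [← sin_add_int_mul_two_pi (2 * r * _) (d * t)]
    congr 1
    rw [ht']
    push_cast
    field_simp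
  simp only [hsin]
  rw [sum_sin_two_mul_mul_cot (Nat.coprime_of_mul_modEq_one h' hinv) (Nat.mod_lt _ (by omega))]
  have hB := periodicB1_natCast_div hk (n * h')
  push_cast at hB
  rw [hB]
  split_ifs
  · simp
  · field_simp
    ring

lemma hasSum_one_div_nat_pow_three_mul_sin {x : ℝ} (hx : x ∈ Set.Icc 0 1) :
    HasSum (fun n : ℕ => 1 / (n : ℝ) ^ 3 * sin (2 * π * n * x))
      ((2 * π) ^ 3 / 12 * (x ^ 3 - 3 / 2 * x ^ 2 + 1 / 2 * x)) := by
  have hB : ((Polynomial.bernoulli 3).map (algebraMap ℚ ℝ)).eval x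
      = x ^ 3 - 3 / 2 * x ^ 2 + 1 / 2 * x := by
    simp [Polynomial.bernoulli, sum_range_succ, bernoulli_eq_bernoulli'_of_ne_one]
    ring
  have h := hasSum_one_div_nat_pow_mul_sin one_ne_zero hx
  rw [show 2 * 1 + 1 = 3 from rfl, hB] at h
  convert h using 2
  norm_num [Nat.factorial]
  ring

lemma sum_bernoulli_three_mul_cot {k h h' : ℕ} (hk : k ≠ 0) (hinv : h * h' ≡ 1 [MOD k]) :
    (2 * π) ^ 3 / 12 * ∑ d ∈ Icc 1 (k - 1),
        (((d : ℝ) / k) ^ 3 - 3 / 2 * ((d : ℝ) / k) ^ 2 + 1 / 2 * ((d : ℝ) / k)) *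
          cot (π * d * h / k)
      = -2 * k * ∑' n : ℕ, periodicB1 (n * h' / k) / (n : ℝ) ^ 3 := by
  have hd : ∀ d ∈ Icc 1 (k - 1),
      HasSum (fun n : ℕ => 1 / (n : ℝ) ^ 3 * sin (2 * π * n * (d / k)) * cot (π * d * h / k))
        ((2 * π) ^ 3 / 12 * (((d : ℝ) / k) ^ 3 - 3 / 2 * ((d : ℝ) / k) ^ 2 + 1 / 2 * ((d : ℝ) / k))
          * cot (π * d * h / k)) := by
    intro d hd
    refine (hasSum_one_div_nat_pow_three_mul_sin ⟨by positivity, ?_⟩).mul_right _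
    rw [div_le_one (by positivity)]
    exact_mod_cast (by simp at hd; omega : d ≤ k)
  have hn (n : ℕ) :
      ∑ d ∈ Icc 1 (k - 1), 1 / (n : ℝ) ^ 3 * sin (2 * π * n * (d / k)) * cot (π * d * h / k)
        = -2 * k * (periodicB1 (n * h' / k) / (n : ℝ) ^ 3) := by
    rw [sum_congr rfl fun d _ => mul_assoc _ _ _, ← mul_sum,
      sum_sin_mul_cot_eq_periodicB1 hk hinv]
    ring
  have := hasSum_sum hd
  rw [funext hn] at this
  rw [← tsum_mul_left, this.tsum_eq, mul_sum]
  exact sum_congr rfl fun d _ => by ring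

lemma tsum_int_eq_two_mul_tsum_nat_of_even {α : Type*} [DivisionRing α] [TopologicalSpace α]
    [IsTopologicalRing α] [T2Space α] {f : ℤ → α} (hf : Summable f)
    (hf_neg : ∀ n : ℕ, f (-n) = f n) (hf_zero : f 0 = 0) :
    ∑' n : ℤ, f n = 2 * ∑' n : ℕ, f n := by
  have := tsum_nat_add_neg hf
  simp only [hf_neg, hf_zero, add_zero, ← two_mul, tsum_mul_left] at this
  exact this.symm

theorem vhk1_eq_fourier_general (h h' k : ℕ) (hk : 2 ≤ k) (hinv : h * h' ≡ 1 [MOD k]) :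
    Summable (fun l : ℤ => |if l = 0 then (0 : ℝ) else
      periodicB1 ((l : ℝ) * h' / k) / (l : ℝ) ^ 3|) ∧
    ((k : ℝ) ^ 2 / 6) * ∑ d ∈ Finset.Icc 1 (k - 1),
        (((d : ℝ) / k) ^ 3 - (3 / 2) * ((d : ℝ) / k) ^ 2 + (1 / 2) * ((d : ℝ) / k)) *
          Real.cot (Real.pi * d * h / k)
      = -(2 * (k : ℝ) ^ 3 / (2 * Real.pi) ^ 3) *
        ∑' l : ℤ, (if l = 0 then (0 : ℝ) else periodicB1 ((l : ℝ) * h' / k) / (l : ℝ) ^ 3) := by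
  -- `x / 0 = 0` makes the case split redundant
  have hite (l : ℤ) : (if l = 0 then (0 : ℝ) else periodicB1 ((l : ℝ) * h' / k) / (l : ℝ) ^ 3)
      = periodicB1 ((l : ℝ) * h' / k) / (l : ℝ) ^ 3 := by
    split_ifs with hl <;> simp [hl]
  have hsum :=
    summable_abs_periodicB1_div_int_pow (fun l : ℤ => (l : ℝ) * h' / k) (by norm_num : 1 < 3)
  simp only [hite]
  refine ⟨hsum, ?_⟩
  rw [tsum_int_eq_two_mul_tsum_nat_of_even hsum.of_abs (fun n => ?_) (by simp)]
  · simp only [Int.cast_natCast]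
    have hπ : (2 * π) ^ 3 / 12 ≠ 0 := by positivity
    rw [eq_div_of_mul_eq hπ ((mul_comm _ _).trans (sum_bernoulli_three_mul_cot (by omega) hinv))]
    generalize ∑' n : ℕ, periodicB1 (n * h' / k) / (n : ℝ) ^ 3 = T
    field_simp
    ring
  · push_cast
    rw [neg_mul, neg_div, periodicB1_neg, Odd.neg_pow (by decide)]
    ring

theorem vhk1_eq_fourier (h h' k : ℕ) (hk : 2 ≤ k)
    (hh1 : 1 ≤ h) (hh : h < k) (hh'1 : 1 ≤ h') (hh' : h' < k)
    (hgcd : Nat.gcd h k = 1) (hinv : h * h' ≡ 1 [MOD k]) :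
    Summable (fun l : ℤ => |if l = 0 then (0 : ℝ) else
      periodicB1 ((l : ℝ) * h' / k) / (l : ℝ) ^ 3|) ∧
    ((k : ℝ) ^ 2 / 6) * ∑ d ∈ Finset.Icc 1 (k - 1),
        (((d : ℝ) / k) ^ 3 - (3 / 2) * ((d : ℝ) / k) ^ 2 + (1 / 2) * ((d : ℝ) / k)) *
          Real.cot (Real.pi * d * h / k)
      = -(2 * (k : ℝ) ^ 3 / (2 * Real.pi) ^ 3) *
        ∑' l : ℤ, (if l = 0 then (0 : ℝ) else periodicB1 ((l : ℝ) * h' / k) / (l : ℝ) ^ 3) :=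
  vhk1_eq_fourier_general h h' k hk hinv
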